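/- For every integer m ≥ 1, every real H ≥ 2, and every probability distribution D supported on [1, H]^m, there exists an integer k with 0 ≤ k ≤ ⌈log₂ H⌉ such that the menu M_p = {(0, 0)} ∪ {(e_j, p) : 1 ≤ j ≤ m} with uniform price p = 2^k (where e_j denotes the j-th standard basis vector of ℝ^m) satisfies Rev_D(M_p) ≥ OPT(D) / (2(⌈log₂ H⌉ + 1)). In particular, a menu with at most m entries besides the null entry extracts an Ω(1/log H) fraction of the optimal revenue. -/

import Mathlib

/-!
Individual rationality caps the price any buyer pays by the value of the lottery received, hence
by `max_j v_j`, so every menu earns at most `E[max_j v_j]`. Cutting `max_j v_j ∈ [1, 2^K]` into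
dyadic layers gives `E[max_j v_j] ≤ 2 ∑_{k ≤ K} 2^k P(max_j v_j ≥ 2^k)`, and the `k`-th term is
the revenue of posting the price `2^k` on every item. The largest of these `K + 1` terms is at
least their average.
-/

open MeasureTheory

/-- An entry of a menu: a lottery (vector of allocation probabilities) together with a price. -/
abbrev Entry (m : ℕ) := (Fin m → ℝ) × ℝ

/-- A lottery: nonnegative coordinates summing to at most 1. -/
def IsLottery (m : ℕ) (x : Fin m → ℝ) : Prop := (∀ j, 0 ≤ x j) ∧ ∑ j, x j ≤ 1

/-- A menu: a finite set of entries containing the null entry `(0, 0)`,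
all of whose entries are lotteries. -/
def IsMenu (m : ℕ) (M : Finset (Entry m)) : Prop :=
  (0, 0) ∈ M ∧ ∀ e ∈ M, IsLottery m e.1

/-- Utility of entry `e` for a buyer with valuation `v`. -/
def utility {m : ℕ} (v : Fin m → ℝ) (e : Entry m) : ℝ := (∑ j, v j * e.1 j) - e.2

/-- A selection rule for menu `M`: picks, for each valuation, a utility-maximizing entry of `M`. -/
def IsSelection {m : ℕ} (M : Finset (Entry m)) (s : (Fin m → ℝ) → Entry m) : Prop :=
  ∀ v, s v ∈ M ∧ ∀ e ∈ M, utility v e ≤ utility v (s v)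

/-- Revenue of a selection rule `s` under distribution `D`: expected price paid. -/
noncomputable def revSel {m : ℕ} (D : Measure (Fin m → ℝ))
    (s : (Fin m → ℝ) → Entry m) : ℝ :=
  ∫ v, (s v).2 ∂D

/-- Revenue of menu `M` under distribution `D`: supremum over selection rules. -/
noncomputable def Rev {m : ℕ} (D : Measure (Fin m → ℝ)) (M : Finset (Entry m)) : ℝ :=
  sSup {r | ∃ s, IsSelection M s ∧ r = revSel D s}

/-- Optimal revenue for a distribution `D`: supremum over all menus. -/
noncomputable def OPT {m : ℕ} (D : Measure (Fin m → ℝ)) : ℝ :=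
  sSup {r | ∃ M : Finset (Entry m), IsMenu m M ∧ r = Rev D M}

open Finset Set

lemma le_two_mul_sum_indicator_pow {x : ℝ} (K : ℕ) (h1 : 1 ≤ x) (hK : x ≤ 2 ^ K) :
    x ≤ 2 * ∑ k ∈ range (K + 1), {y : ℝ | 2 ^ k ≤ y}.indicator (fun _ => (2 : ℝ) ^ k) x := by
  have hnn : ∀ k, 0 ≤ {y : ℝ | 2 ^ k ≤ y}.indicator (fun _ => (2 : ℝ) ^ k) x :=
    fun k => indicator_nonneg (fun _ _ => by positivity) x
  induction K with
  | zero =>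
    rw [zero_add, sum_range_one, pow_zero, indicator_of_mem (by simpa using h1)]
    linarith
  | succ K ih =>
    rw [sum_range_succ]
    by_cases hx : x ≤ 2 ^ K
    · linarith [ih hx, hnn (K + 1)]
    · have hall : ∀ k ∈ range (K + 1),
          {y : ℝ | 2 ^ k ≤ y}.indicator (fun _ => (2 : ℝ) ^ k) x = 2 ^ k := fun k hk =>
        indicator_of_mem ((pow_le_pow_right₀ one_le_two (mem_range_succ_iff.mp hk)).trans
          (not_le.mp hx).le) _
      have hgeom : ∑ k ∈ range (K + 1), (2 : ℝ) ^ k = 2 ^ (K + 1) - 1 := by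
        rw [geom_sum_eq (by norm_num)]; ring
      have htwo : (2 : ℝ) ≤ 2 ^ (K + 1) := le_self_pow₀ one_le_two (by omega)
      rw [sum_congr rfl hall, hgeom]
      linarith [hnn (K + 1)]

lemma integral_le_two_mul_sum_pow_mul_measureReal {α : Type*} [MeasurableSpace α]
    {μ : Measure α} [IsFiniteMeasure μ] {f : α → ℝ} (hf : Measurable f) (K : ℕ)
    (hbd : ∀ᵐ a ∂μ, f a ∈ Set.Icc 1 (2 ^ K)) :
    ∫ a, f a ∂μ ≤ 2 * ∑ k ∈ range (K + 1), 2 ^ k * μ.real {a | 2 ^ k ≤ f a} := by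
  have hmeas : ∀ k, MeasurableSet {a | (2 : ℝ) ^ k ≤ f a} := fun k =>
    measurableSet_le measurable_const hf
  have hint : ∀ k ∈ range (K + 1),
      Integrable ({a | (2 : ℝ) ^ k ≤ f a}.indicator fun _ => (2 : ℝ) ^ k) μ := fun k _ =>
    (integrable_const _).indicator (hmeas k)
  calc ∫ a, f a ∂μ
      ≤ ∫ a, 2 * ∑ k ∈ range (K + 1), {a | (2 : ℝ) ^ k ≤ f a}.indicator (fun _ => 2 ^ k) a ∂μ :=
        integral_mono_ae (.of_mem_Icc 1 (2 ^ K) hf.aemeasurable hbd)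
          ((integrable_finsetSum _ hint).const_mul 2)
          (hbd.mono fun a ha => le_two_mul_sum_indicator_pow K ha.1 ha.2)
    _ = 2 * ∑ k ∈ range (K + 1), 2 ^ k * μ.real {a | 2 ^ k ≤ f a} := by
        rw [integral_const_mul, integral_finsetSum _ hint]
        simp_rw [integral_indicator_const _ (hmeas _), smul_eq_mul, mul_comm]

variable {m : ℕ}

lemma utility_zero (v : Fin m → ℝ) : utility v (0, 0) = 0 := by
  simp [utility]

lemma sum_mul_le_iSup_of_isLottery {v x : Fin m → ℝ} (hx : IsLottery m x)
    (hv : 0 ≤ ⨆ j, v j) : ∑ j, v j * x j ≤ ⨆ j, v j :=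
  calc ∑ j, v j * x j ≤ ∑ j, (⨆ i, v i) * x j :=
        sum_le_sum fun j _ => mul_le_mul_of_nonneg_right
          (le_ciSup (Set.finite_range v).bddAbove j) (hx.1 j)
    _ = (⨆ i, v i) * ∑ j, x j := (mul_sum ..).symm
    _ ≤ ⨆ i, v i := mul_le_of_le_one_right hv hx.2

lemma price_le_iSup_of_isSelection {M : Finset (Entry m)} {s : (Fin m → ℝ) → Entry m}
    (hM : IsMenu m M) (hs : IsSelection M s) {v : Fin m → ℝ} (hv : 0 ≤ ⨆ j, v j) :
    (s v).2 ≤ ⨆ j, v j := by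
  have hrational : utility v (0, 0) ≤ utility v (s v) := (hs v).2 _ hM.1
  rw [utility_zero, utility] at hrational
  linarith [sum_mul_le_iSup_of_isLottery (hM.2 _ (hs v).1) hv]

lemma OPT_le_integral_iSup {D : Measure (Fin m → ℝ)}
    (hint : Integrable (fun v => ⨆ j, v j) D) (hnn : ∀ᵐ v ∂D, 0 ≤ ⨆ j, v j) :
    OPT D ≤ ∫ v, ⨆ j, v j ∂D := by
  have hI : 0 ≤ ∫ v, ⨆ j, v j ∂D := integral_nonneg_of_ae hnn
  refine Real.sSup_le ?_ hI
  rintro _ ⟨M, hM, rfl⟩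
  refine Real.sSup_le ?_ hI
  rintro _ ⟨s, hs, rfl⟩
  by_cases hs_int : Integrable (fun v => (s v).2) D
  · exact integral_mono_ae hs_int hint
      (hnn.mono fun v hv => price_le_iSup_of_isSelection hM hs hv)
  · rw [revSel, integral_undef hs_int]
    exact hI

lemma revSel_le_Rev {D : Measure (Fin m → ℝ)} [IsFiniteMeasure D] {M : Finset (Entry m)}
    {s : (Fin m → ℝ) → Entry m} (hs : IsSelection M s) : revSel D s ≤ Rev D M := by
  set c := ∑ e ∈ M, |e.2|
  have hprice : ∀ e ∈ M, e.2 ≤ c := fun e he =>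
    (le_abs_self _).trans
      (single_le_sum (f := fun e : Entry m => |e.2|) (fun _ _ => abs_nonneg _) he)
  refine le_csSup ⟨D.real univ * c, ?_⟩ ⟨s, hs, rfl⟩
  rintro _ ⟨s', hs', rfl⟩
  by_cases hs'_int : Integrable (fun v => (s' v).2) D
  · calc revSel D s' ≤ ∫ _, c ∂D :=
          integral_mono hs'_int (integrable_const c) fun v => hprice _ (hs' v).1
      _ = D.real univ * c := by rw [integral_const, smul_eq_mul]
  · rw [revSel, integral_undef hs'_int]
    positivity

variable (m) in
noncomputable def uniformMenu (p : ℝ) : Finset (Entry m) :=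
  insert (0, 0) (univ.image fun j : Fin m => (Pi.single j (1 : ℝ), p))

lemma utility_single (v : Fin m → ℝ) (j : Fin m) (p : ℝ) :
    utility v (Pi.single j 1, p) = v j - p := by
  simp [utility, Pi.single_apply]

lemma isLottery_single (j : Fin m) : IsLottery m (Pi.single j 1) :=
  ⟨fun i => by by_cases h : i = j <;> simp [h], by simp⟩

lemma isMenu_uniformMenu (p : ℝ) : IsMenu m (uniformMenu m p) := by
  refine ⟨mem_insert_self _ _, fun e he => ?_⟩
  rcases mem_insert.mp he with rfl | he
  · exact ⟨fun _ => le_rfl, by simp⟩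
  · obtain ⟨j, -, rfl⟩ := mem_image.mp he
    exact isLottery_single j

lemma card_uniformMenu_le (p : ℝ) : (uniformMenu m p).card ≤ m + 1 :=
  (card_insert_le _ _).trans <| by simpa using card_image_le (s := (univ : Finset (Fin m)))

section Selection

variable [Nonempty (Fin m)]

noncomputable def uniformSelection (p : ℝ) (v : Fin m → ℝ) : Entry m :=
  if p ≤ ⨆ j, v j then (Pi.single (exists_eq_ciSup_of_finite (f := v)).choose 1, p) else (0, 0)

lemma isSelection_uniformSelection (p : ℝ) :
    IsSelection (uniformMenu m p) (uniformSelection p) := by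
  intro v
  have hle : ∀ j, v j ≤ ⨆ i, v i := le_ciSup (Set.finite_range v).bddAbove
  have hmenu : ∀ e ∈ uniformMenu m p, utility v e = 0 ∨ ∃ j, utility v e = v j - p := by
    intro e he
    rcases mem_insert.mp he with rfl | he
    · exact .inl (utility_zero v)
    · obtain ⟨j, -, rfl⟩ := mem_image.mp he
      exact .inr ⟨j, utility_single v j p⟩
  unfold uniformSelection
  split_ifs with hp
  · set j₀ := (exists_eq_ciSup_of_finite (f := v)).choose
    have hj₀ : v j₀ = ⨆ i, v i := (exists_eq_ciSup_of_finite (f := v)).choose_spec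
    refine ⟨mem_insert_of_mem (mem_image_of_mem _ (mem_univ j₀)), fun e he => ?_⟩
    rw [utility_single, hj₀]
    rcases hmenu e he with h | ⟨j, h⟩
    · rw [h]; linarith
    · rw [h]; linarith [hle j]
  · refine ⟨mem_insert_self _ _, fun e he => ?_⟩
    rw [utility_zero]
    rcases hmenu e he with h | ⟨j, h⟩
    · exact h.le
    · rw [h]; linarith [hle j]

lemma revSel_uniformSelection (D : Measure (Fin m → ℝ)) (p : ℝ) :
    revSel D (uniformSelection (m := m) p) = p * D.real {v | p ≤ ⨆ j, v j} := by
  have hprice : (fun v : Fin m → ℝ => (uniformSelection p v).2) =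
      {v | p ≤ ⨆ j, v j}.indicator fun _ => p := by
    ext v
    by_cases h : p ≤ ⨆ j, v j <;> simp [uniformSelection, h]
  rw [revSel, hprice, integral_indicator_const _ (measurableSet_le measurable_const (by fun_prop)),
    smul_eq_mul, mul_comm]

end Selection

lemma mul_measureReal_le_Rev_uniformMenu [Nonempty (Fin m)] (D : Measure (Fin m → ℝ))
    [IsFiniteMeasure D] (p : ℝ) : p * D.real {v | p ≤ ⨆ j, v j} ≤ Rev D (uniformMenu m p) :=
  revSel_uniformSelection D p ▸ revSel_le_Rev (isSelection_uniformSelection p)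

lemma le_pow_natCeil_logb {b H : ℝ} (hb : 1 < b) (hH : 0 < H) : H ≤ b ^ ⌈Real.logb b H⌉₊ := by
  rw [← Real.rpow_natCast, ← Real.logb_le_iff_le_rpow hb hH]
  exact Nat.le_ceil _

/-- **Proposition 3.** For every `m ≥ 1`, `H ≥ 2`, and every distribution `D` supported on
`[1, H]^m`, some uniform-price menu with price a power of two `2^k`, `0 ≤ k ≤ ⌈log₂ H⌉`
(selling each item `j` via the entry `(e_j, 2^k)`), extracts at least a
`1/(2(⌈log₂ H⌉ + 1))` fraction of the optimal revenue; it has at most `m` entries besides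
the null entry. -/
theorem uniform_price_log_approx :
    ∀ (m : ℕ), 1 ≤ m → ∀ H : ℝ, 2 ≤ H →
      ∀ D : Measure (Fin m → ℝ), IsProbabilityMeasure D →
        D {v | ∀ j, v j ∈ Set.Icc (1 : ℝ) H} = 1 →
        ∃ k : ℕ, k ≤ ⌈Real.logb 2 H⌉₊ ∧
          (let M : Finset (Entry m) :=
            insert (0, 0)
              (Finset.univ.image fun j : Fin m => (Pi.single j (1 : ℝ), (2 : ℝ) ^ k));
          IsMenu m M ∧ M.card ≤ m + 1 ∧
            OPT D / (2 * ((⌈Real.logb 2 H⌉₊ : ℝ) + 1)) ≤ Rev D M) := by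
  intro m hm H hH D hD hsupp
  have : Nonempty (Fin m) := ⟨⟨0, hm⟩⟩
  set K := ⌈Real.logb 2 H⌉₊
  set vmax : (Fin m → ℝ) → ℝ := fun v => ⨆ j, v j
  have hbox : ∀ᵐ v ∂D, ∀ j, v j ∈ Set.Icc (1 : ℝ) H := by
    have hmeas : MeasurableSet {v : Fin m → ℝ | ∀ j, v j ∈ Set.Icc (1 : ℝ) H} := by
      measurability
    rw [ae_iff_measure_eq hmeas.nullMeasurableSet, hsupp, measure_univ]
  have hvmax_meas : Measurable vmax := by fun_prop
  have hbd : ∀ᵐ v ∂D, vmax v ∈ Set.Icc 1 (2 ^ K) := hbox.mono fun v hv =>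
    ⟨(hv ⟨0, hm⟩).1.trans (le_ciSup (finite_range v).bddAbove _),
      (ciSup_le fun j => (hv j).2).trans (le_pow_natCeil_logb one_lt_two (by linarith))⟩
  have hOPT : OPT D ≤ 2 * ∑ k ∈ range (K + 1), 2 ^ k * D.real {v | 2 ^ k ≤ vmax v} :=
    (OPT_le_integral_iSup (.of_mem_Icc 1 (2 ^ K) hvmax_meas.aemeasurable hbd)
      (hbd.mono fun v hv => zero_le_one.trans hv.1)).trans
        (integral_le_two_mul_sum_pow_mul_measureReal hvmax_meas K hbd)
  obtain ⟨k, hk, hk_max⟩ := exists_max_image (range (K + 1))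
    (fun k => (2 : ℝ) ^ k * D.real {v | 2 ^ k ≤ vmax v}) nonempty_range_add_one
  have hsum := sum_le_card_nsmul _ _ _ hk_max
  rw [card_range, nsmul_eq_mul, Nat.cast_add_one] at hsum
  refine ⟨k, mem_range_succ_iff.mp hk, isMenu_uniformMenu _, card_uniformMenu_le _, ?_⟩
  rw [div_le_iff₀ (by positivity)]
  calc OPT D ≤ 2 * ((K + 1) * (2 ^ k * D.real {v | 2 ^ k ≤ vmax v})) := by linarith
    _ ≤ 2 * ((K + 1) * Rev D (uniformMenu m (2 ^ k))) := by
        gcongr; exact mul_measureReal_le_Rev_uniformMenu D _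
    _ = Rev D (uniformMenu m (2 ^ k)) * (2 * (K + 1)) := by ring
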